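/- Let α > 0 and z_n = √n · e^{2πi α √n} ∈ ℂ. Then the point set {z_n : n ≥ 1} is uniformly discrete: there exists r > 0 such that |z_m − z_n| ≥ r for all m ≠ n. -/

import Mathlib

open Filter Topology MeasureTheory

lemma abs_sub_polar (s t θ₁ θ₂ : ℝ) :
    ‖(s:ℂ) * Complex.exp (θ₁ * Complex.I) - (t:ℂ) * Complex.exp (θ₂ * Complex.I)‖ ^ 2
      = s^2 + t^2 - 2*s*t*Real.cos (θ₁ - θ₂) := by
  rw [Complex.sq_norm]
  simp only [Complex.exp_mul_I, ← Complex.ofReal_cos, ← Complex.ofReal_sin]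
  simp [Complex.normSq_apply, Complex.cos_ofReal_re, Complex.sin_ofReal_re, Real.cos_sub]
  nlinarith [Real.sin_sq_add_cos_sq θ₁, Real.sin_sq_add_cos_sq θ₂]

/-- The point `z_n = √n · e^{2πi ξ_n}` in the complex plane. -/
noncomputable def zseq (ξ : ℕ → ℝ) (n : ℕ) : ℂ :=
  (Real.sqrt n : ℂ) * Complex.exp (2 * Real.pi * Complex.I * (ξ n : ℂ))

lemma zseq_eq (α : ℝ) (k : ℕ) :
    zseq (fun j => α * Real.sqrt j) k
      = (Real.sqrt k : ℂ) * Complex.exp (((2*Real.pi*α*Real.sqrt k : ℝ):ℂ) * Complex.I) := by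
  unfold zseq
  push_cast
  ring_nf

set_option maxHeartbeats 1600000 in
lemma key_ineq (α : ℝ) (hα : 0 < α) :
    ∃ r : ℝ, 0 < r ∧ ∀ s t : ℝ, 1 ≤ s → 1 ≤ t → s ≠ t → 1 ≤ |s - t| * (s + t) →
      r^2 ≤ s^2 + t^2 - 2*s*t*Real.cos (2*Real.pi*α*s - 2*Real.pi*α*t) := by
  have hπ := Real.pi_pos
  set δ : ℝ := min 1 (1/(2*α)) with hδdef
  have hδpos : 0 < δ := lt_min one_pos (by positivity)
  refine ⟨min δ (4*α/3), lt_min hδpos (by positivity), ?_⟩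
  set r : ℝ := min δ (4*α/3) with hrdef
  have hr : 0 < r := lt_min hδpos (by positivity)
  intro s t hs ht hst habs
  have hφ : 2*Real.pi*α*s - 2*Real.pi*α*t = 2*Real.pi*α*(s-t) := by ring
  rw [hφ]
  set φ : ℝ := 2*Real.pi*α*(s-t) with hφdef
  rcases le_or_gt δ |s - t| with hcase | hcase
  · -- |s-t| large: use (s-t)^2 term
    have h1 : r ≤ δ := min_le_left _ _
    have h3 : δ^2 ≤ |s-t|^2 := pow_le_pow_left₀ hδpos.le hcase 2
    have h2 : r^2 ≤ (s-t)^2 := by nlinarith [abs_nonneg (s-t), sq_abs (s-t)]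
    nlinarith [Real.cos_le_one φ, mul_pos (lt_of_lt_of_le one_pos hs) (lt_of_lt_of_le one_pos ht)]
  · -- |s-t| small
    have hd1 : |s-t| ≤ 1 := le_trans hcase.le (min_le_left _ _)
    have hd2 : |s-t| ≤ 1/(2*α) := le_trans hcase.le (min_le_right _ _)
    have hφπ : |φ| ≤ Real.pi := by
      rw [hφdef, abs_mul, abs_of_pos (by positivity : (0:ℝ) < 2*Real.pi*α)]
      calc 2*Real.pi*α*|s-t| ≤ 2*Real.pi*α*(1/(2*α)) := by
            apply mul_le_mul_of_nonneg_left hd2 (by positivity)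
        _ = Real.pi := by field_simp
    have hcos : Real.cos φ ≤ 1 - 2/Real.pi^2 * φ^2 := Real.cos_le_one_sub_mul_cos_sq hφπ
    have heq : 2/Real.pi^2 * φ^2 = 8*α^2*(s-t)^2 := by rw [hφdef]; field_simp; ring
    have hst1 : (1:ℝ) ≤ s*t := by
      have := mul_le_mul hs ht zero_le_one (le_trans zero_le_one hs)
      linarith
    have hdsq : (s-t)^2 ≤ 1 := by nlinarith [sq_abs (s-t), abs_nonneg (s-t)]
    have h9 : (s+t)^2 ≤ 9*(s*t) := by nlinarith
    have hsq1 : (1:ℝ) ≤ (s-t)^2*(s+t)^2 := by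
      have h := mul_le_mul habs habs zero_le_one
        (mul_nonneg (abs_nonneg (s-t)) (by linarith : (0:ℝ) ≤ s+t))
      rw [show |s-t| * (s+t) * (|s-t| * (s+t)) = |s-t| ^ 2 * (s+t)^2 from by ring, sq_abs] at h
      linarith
    have hstd : 1/9 ≤ s*t*(s-t)^2 := by
      have h := mul_le_mul_of_nonneg_left h9 (sq_nonneg (s-t))
      nlinarith
    have hr2 : r^2 ≤ 16*α^2/9 := by
      have h1 : r ≤ 4*α/3 := min_le_right _ _
      nlinarith
    have hst0 : (0:ℝ) ≤ 2*(s*t) := by linarith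
    have hc' : 2/Real.pi^2*φ^2 ≤ 1 - Real.cos φ := by linarith
    have e1 : 2*(s*t)*(2/Real.pi^2*φ^2) ≤ 2*(s*t)*(1 - Real.cos φ) :=
      mul_le_mul_of_nonneg_left hc' hst0
    have e2 : 2*(s*t)*(2/Real.pi^2*φ^2) = 16*α^2*(s*t*(s-t)^2) := by rw [heq]; ring
    have h16 : (0:ℝ) ≤ 16*α^2 := by positivity
    have e3 : 16*α^2*(1/9) ≤ 16*α^2*(s*t*(s-t)^2) :=
      mul_le_mul_of_nonneg_left hstd h16
    have e4 : s^2 + t^2 - 2*s*t*Real.cos φ = (s-t)^2 + 2*(s*t)*(1-Real.cos φ) := by ring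
    linarith [sq_nonneg (s-t)]

/-- For any `α > 0`, the set `{√n · e^{2πiα√n} : n ≥ 1}` is uniformly discrete. -/
theorem uniformly_discrete_sqrt (α : ℝ) (hα : 0 < α) :
    ∃ r : ℝ, 0 < r ∧ ∀ m n : ℕ, 1 ≤ m → 1 ≤ n → m ≠ n →
      r ≤ ‖zseq (fun k => α * Real.sqrt k) m - zseq (fun k => α * Real.sqrt k) n‖ := by
  obtain ⟨r, hr, key⟩ := key_ineq α hα
  refine ⟨r, hr, ?_⟩
  intro m n hm hn hmn
  set s : ℝ := Real.sqrt m with hsdef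
  set t : ℝ := Real.sqrt n with htdef
  have hms : s^2 = (m:ℝ) := Real.sq_sqrt (by positivity)
  have hnt : t^2 = (n:ℝ) := Real.sq_sqrt (by positivity)
  have hs : 1 ≤ s := by
    rw [hsdef, show (1:ℝ) = Real.sqrt 1 from (Real.sqrt_one).symm]
    exact Real.sqrt_le_sqrt (by exact_mod_cast hm)
  have ht : 1 ≤ t := by
    rw [htdef, show (1:ℝ) = Real.sqrt 1 from (Real.sqrt_one).symm]
    exact Real.sqrt_le_sqrt (by exact_mod_cast hn)
  have hstne : s ≠ t := by
    intro h
    exact hmn (by exact_mod_cast (Real.sqrt_inj (by positivity) (by positivity)).mp h)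
  have hint : (1:ℝ) ≤ |(m:ℝ) - (n:ℝ)| := by
    have h1 : 1 ≤ |(m:ℤ) - (n:ℤ)| := Int.one_le_abs (by omega)
    have : ((|(m:ℤ) - (n:ℤ)|:ℤ):ℝ) = |(m:ℝ) - (n:ℝ)| := by push_cast; ring_nf
    rw [← this]; exact_mod_cast h1
  have habs : 1 ≤ |s - t| * (s + t) := by
    have h2 : |s - t| * (s + t) = |(m:ℝ) - (n:ℝ)| := by
      rw [← abs_of_nonneg (by positivity : (0:ℝ) ≤ s + t), ← abs_mul]
      congr 1
      nlinarith
    rw [h2]; exact hint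
  have hA := key s t hs ht hstne habs
  rw [zseq_eq, zseq_eq]
  have h2 := abs_sub_polar s t (2*Real.pi*α*s) (2*Real.pi*α*t)
  have hnn := norm_nonneg ((s:ℂ) * Complex.exp (((2*Real.pi*α*s : ℝ):ℂ) * Complex.I)
    - (t:ℂ) * Complex.exp (((2*Real.pi*α*t : ℝ):ℂ) * Complex.I))
  nlinarith [h2, hA, hnn, hr]
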